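/- arXiv:math/9910189 — 2 statements merged into one kernel-verified Lean document; each statement's English description precedes it below -/
import Mathlib

section
/- Let u be a smooth positive solution of the nonlinear diffusion equation u_t = ∂_x(u_x/u) on ℝ × (0,∞). Then the function U defined for y > 0, s ∈ ℝ by U(y,s) = (y e^{s/2})^{-2} u(ln y + s/2, e^s) is a smooth positive solution of U_s = ∂_y(U_y/U) + (1/(y U) + y/2) U_y on (0,∞) × ℝ. (This is the finite form of the transformation x' = e^x/√t, t' = ln t, u' = u e^{-2x}.) -/
open Real Set

/-- `u` is a smooth positive solution of the nonlinear diffusion equation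
`u_t = ∂ₓ(uₓ/u)` on the set `D`. -/
def IsSolDiff (u : ℝ → ℝ → ℝ) (D : Set (ℝ × ℝ)) : Prop :=
  ContDiffOn ℝ (⊤ : ℕ∞) (fun p : ℝ × ℝ => u p.1 p.2) D ∧
  (∀ p ∈ D, 0 < u p.1 p.2) ∧
  ∀ p ∈ D,
    deriv (fun t => u p.1 t) p.2 =
      deriv (fun x => deriv (fun x' => u x' p.2) x / u x p.2) p.1

/-- if `u` is a smooth positive solution of `u_t = ∂ₓ(uₓ/u)` on
`ℝ × (0,∞)`, then `U(y,s) = (y e^{s/2})⁻² u(ln y + s/2, e^s)` is a smooth positive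
solution of `U_s = ∂_y(U_y/U) + (1/(yU) + y/2) U_y` on `(0,∞) × ℝ` (the finite
form of `x' = eˣ/√t, t' = ln t, u' = u e^{-2x}`). -/
theorem stmt5 (u : ℝ → ℝ → ℝ) (hu : IsSolDiff u (univ ×ˢ Ioi 0))
    (U : ℝ → ℝ → ℝ)
    (hU : ∀ y s : ℝ, U y s = ((y * exp (s / 2)) ^ 2)⁻¹ * u (log y + s / 2) (exp s)) :
    ContDiffOn ℝ (⊤ : ℕ∞) (fun p : ℝ × ℝ => U p.1 p.2) (Ioi 0 ×ˢ univ) ∧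
    (∀ p ∈ (Ioi 0 ×ˢ univ : Set (ℝ × ℝ)), 0 < U p.1 p.2) ∧
    ∀ p ∈ (Ioi 0 ×ˢ univ : Set (ℝ × ℝ)),
      deriv (fun s => U p.1 s) p.2 =
        deriv (fun y => deriv (fun y' => U y' p.2) y / U y p.2) p.1 +
          (1 / (p.1 * U p.1 p.2) + p.1 / 2) * deriv (fun y => U y p.2) p.1 := by
  obtain ⟨hsm, hpos, hpde⟩ := hu
  set F : ℝ × ℝ → ℝ := fun p => u p.1 p.2 with hFdef
  have hSopen : IsOpen ((univ : Set ℝ) ×ˢ Ioi (0 : ℝ)) := isOpen_univ.prod isOpen_Ioi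
  have hFat : ∀ x t : ℝ, 0 < t → ContDiffAt ℝ (⊤ : ℕ∞) F (x, t) := fun x t ht =>
    hsm.contDiffAt (hSopen.mem_nhds ⟨mem_univ _, ht⟩)
  have hFD : ∀ x t : ℝ, 0 < t → HasFDerivAt F (fderiv ℝ F (x, t)) (x, t) := fun x t ht =>
    ((hFat x t ht).differentiableAt (by simp)).hasFDerivAt
  -- partial derivative in x of the slice
  have hslicex : ∀ x t : ℝ, 0 < t →
      HasDerivAt (fun x' => u x' t) (fderiv ℝ F (x, t) (1, 0)) x := by
    intro x t ht
    have h := (hFD x t ht).comp_hasDerivAt x ((hasDerivAt_id x).prodMk (hasDerivAt_const x t))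
    exact h
  -- partial derivative in t of the slice
  have hslicet : ∀ x t : ℝ, 0 < t →
      HasDerivAt (fun t' => u x t') (fderiv ℝ F (x, t) (0, 1)) t := by
    intro x t ht
    have h := (hFD x t ht).comp_hasDerivAt t ((hasDerivAt_const t x).prodMk (hasDerivAt_id t))
    exact h
  -- evaluation of a continuous linear map on ℝ×ℝ
  have hL : ∀ (L : ℝ × ℝ →L[ℝ] ℝ) (a b : ℝ), L (a, b) = a * L (1, 0) + b * L (0, 1) := by
    intro L a b
    have h : ((a, b) : ℝ × ℝ) = a • ((1 : ℝ), (0 : ℝ)) + b • ((0 : ℝ), (1 : ℝ)) := by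
      simp
    rw [h, map_add, map_smul, map_smul, smul_eq_mul, smul_eq_mul]
  -- differentiability of the partial derivative in x
  have hdux : ∀ x t : ℝ, 0 < t →
      DifferentiableAt ℝ (fun x' => fderiv ℝ F (x', t) (1, 0)) x := by
    intro x t ht
    have h1 : ContDiffAt ℝ (⊤ : ℕ∞) (fderiv ℝ F) (x, t) := (hFat x t ht).fderiv_right (by simp)
    have h2 : DifferentiableAt ℝ (fun x' : ℝ => fderiv ℝ F (x', t)) x :=
      (h1.differentiableAt (by simp)).comp x (differentiableAt_id.prodMk (differentiableAt_const t))
    exact ((ContinuousLinearMap.apply ℝ ℝ ((1 : ℝ), (0 : ℝ))).differentiableAt).comp x h2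
  refine ⟨?_, ?_, ?_⟩
  · -- smoothness
    have hexp : ContDiffOn ℝ (⊤ : ℕ∞)
        (fun p : ℝ × ℝ => ((p.1 * exp (p.2 / 2)) ^ 2)⁻¹ * F (log p.1 + p.2 / 2, exp p.2))
        (Ioi 0 ×ˢ univ) := by
      intro p hp
      have hy : (0 : ℝ) < p.1 := hp.1
      have hc1 : ContDiffAt ℝ (⊤ : ℕ∞) (fun p : ℝ × ℝ => ((p.1 * exp (p.2 / 2)) ^ 2)⁻¹) p := by
        refine ContDiffAt.inv ?_ (by positivity)
        exact (contDiffAt_fst.mul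
          ((Real.contDiff_exp.contDiffAt).comp p (contDiffAt_snd.div_const 2))).pow 2
      have hc2 : ContDiffAt ℝ (⊤ : ℕ∞) (fun p : ℝ × ℝ => F (log p.1 + p.2 / 2, exp p.2)) p := by
        refine ContDiffAt.comp (g := F) (f := fun p : ℝ × ℝ => (log p.1 + p.2 / 2, exp p.2)) p
          (hFat _ _ (exp_pos p.2)) ?_
        exact (((Real.contDiffAt_log.2 (ne_of_gt hy)).comp p contDiffAt_fst).add
          (contDiffAt_snd.div_const 2)).prodMk
          ((Real.contDiff_exp.contDiffAt).comp p contDiffAt_snd)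
      exact (hc1.mul hc2).contDiffWithinAt
    refine hexp.congr ?_
    intro p hp
    simp only [hFdef]
    exact hU p.1 p.2
  · -- positivity
    rintro ⟨y, s⟩ ⟨hy, -⟩
    rw [hU]
    exact mul_pos (inv_pos.2 (pow_pos (mul_pos hy (exp_pos _)) 2))
      (hpos (_, _) ⟨mem_univ _, exp_pos s⟩)
  · -- the PDE
    rintro ⟨y, s⟩ ⟨hy, -⟩
    simp only
    have hy0 : y ≠ 0 := ne_of_gt hy
    have ht : (0 : ℝ) < exp s := exp_pos s
    set x : ℝ := log y + s / 2 with hxdef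
    set a : ℝ := u x (exp s) with hadef
    have hapos : 0 < a := hpos (x, exp s) ⟨mem_univ _, ht⟩
    set b : ℝ := fderiv ℝ F (x, exp s) (1, 0) with hbdef
    set c : ℝ := fderiv ℝ F (x, exp s) (0, 1) with hcdef
    set q : ℝ → ℝ := fun x' => fderiv ℝ F (x', exp s) (1, 0) / u x' (exp s) with hqdef
    have hq_eq : (fun x' => deriv (fun x'' => u x'' (exp s)) x' / u x' (exp s)) = q := by
      funext x'
      rw [hqdef]
      rw [(hslicex x' _ ht).deriv]
    have hqdiff : DifferentiableAt ℝ q x := by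
      refine (hdux x _ ht).div (hslicex x _ ht).differentiableAt ?_
      exact hapos.ne'
    have hqd : HasDerivAt q (deriv q x) x := hqdiff.hasDerivAt
    have hqx : q x = b / a := rfl
    have hPDE : c = deriv q x := by
      have h := hpde (x, exp s) ⟨mem_univ _, ht⟩
      simp only at h
      rw [(hslicet x _ ht).deriv] at h
      rw [hq_eq] at h
      exact h
    -- derivative in s
    have hE : HasDerivAt (fun s' => exp (s' / 2)) (exp (s / 2) * (1 / 2)) s :=
      ((hasDerivAt_id s).div_const 2).exp
    have hinv : HasDerivAt (fun s' => ((y * exp (s' / 2)) ^ 2)⁻¹)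
        (-(2 * (y * exp (s / 2)) ^ 1 * (y * (exp (s / 2) * (1 / 2)))) /
          ((y * exp (s / 2)) ^ 2) ^ 2) s := by
      exact (((hE.const_mul y).pow 2).inv (pow_ne_zero _ (mul_ne_zero hy0 (exp_pos _).ne')))
    have hcurve : HasDerivAt (fun s' => (log y + s' / 2, exp s'))
        (((1 : ℝ) / 2, exp s) : ℝ × ℝ) s := by
      have h1 : HasDerivAt (fun s' : ℝ => log y + s' / 2) (1 / 2) s := by
        simpa using ((hasDerivAt_id s).div_const 2).const_add (log y)
      exact h1.prodMk (Real.hasDerivAt_exp s)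
    have hucomp : HasDerivAt (fun s' => u (log y + s' / 2) (exp s'))
        (fderiv ℝ F (x, exp s) (1 / 2, exp s)) s := by
      have h := (hFD x _ ht).comp_hasDerivAt s hcurve
      exact h
    have hUs : HasDerivAt (fun s' => U y s')
        (-(2 * (y * exp (s / 2)) ^ 1 * (y * (exp (s / 2) * (1 / 2)))) /
            ((y * exp (s / 2)) ^ 2) ^ 2 * a +
          ((y * exp (s / 2)) ^ 2)⁻¹ * fderiv ℝ F (x, exp s) (1 / 2, exp s)) s := by
      have hcongr : (fun s' => U y s') =
          fun s' => ((y * exp (s' / 2)) ^ 2)⁻¹ * u (log y + s' / 2) (exp s') :=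
        funext (hU y)
      rw [hcongr]
      exact hinv.mul hucomp
    -- derivative in y at an arbitrary point y' > 0
    have hUy : ∀ y' : ℝ, 0 < y' → HasDerivAt (fun y'' => U y'' s)
        ((-(2 * (y' * exp (s / 2)) ^ 1 * (1 * exp (s / 2))) / ((y' * exp (s / 2)) ^ 2) ^ 2) *
            u (log y' + s / 2) (exp s) +
          ((y' * exp (s / 2)) ^ 2)⁻¹ *
            (fderiv ℝ F (log y' + s / 2, exp s) (1, 0) * (1 / y'))) y' := by
      intro y' hy'
      have hcongr : (fun y'' => U y'' s) =
          fun y'' => ((y'' * exp (s / 2)) ^ 2)⁻¹ * u (log y'' + s / 2) (exp s) :=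
        funext fun y'' => hU y'' s
      rw [hcongr]
      have g1 : HasDerivAt (fun y'' : ℝ => ((y'' * exp (s / 2)) ^ 2)⁻¹)
          (-(2 * (y' * exp (s / 2)) ^ 1 * (1 * exp (s / 2))) / ((y' * exp (s / 2)) ^ 2) ^ 2)
          y' := by
        exact ((((hasDerivAt_id y').mul_const (exp (s / 2))).pow 2).inv (pow_ne_zero _ (mul_ne_zero (ne_of_gt hy') (exp_pos _).ne')))
      have g2 : HasDerivAt (fun y'' : ℝ => u (log y'' + s / 2) (exp s))
          (fderiv ℝ F (log y' + s / 2, exp s) (1, 0) * (1 / y')) y' := by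
        have hlog : HasDerivAt (fun y'' : ℝ => log y'' + s / 2) (1 / y') y' := by
          simpa using (Real.hasDerivAt_log (ne_of_gt hy')).add_const (s / 2)
        exact (hslicex (log y' + s / 2) _ ht).comp y' hlog
      exact g1.mul g2
    -- ratio formula
    have hratio : ∀ y' : ℝ, 0 < y' →
        deriv (fun y'' => U y'' s) y' / U y' s =
          (y')⁻¹ * (q (log y' + s / 2) - 2) := by
      intro y' hy'
      rw [(hUy y' hy').deriv, hU y' s]
      simp only [hqdef]
      have hy'0 : y' ≠ 0 := ne_of_gt hy'
      have hu0 : u (log y' + s / 2) (exp s) ≠ 0 :=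
        (hpos (_, _) ⟨mem_univ _, ht⟩).ne'
      have hE0 : exp (s / 2) ≠ 0 := (exp_pos _).ne'
      set A : ℝ := u (log y' + s / 2) (exp s) with hAdef
      set B : ℝ := fderiv ℝ F (log y' + s / 2, exp s) (1, 0) with hBdef
      field_simp
      ring
    have houter : deriv (fun y'' => deriv (fun y3 => U y3 s) y'' / U y'' s) y =
        deriv (fun y'' => (y'')⁻¹ * (q (log y'' + s / 2) - 2)) y := by
      apply Filter.EventuallyEq.deriv_eq
      filter_upwards [Ioi_mem_nhds hy] with y' hy'
      exact hratio y' hy'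
    have hq_comp : HasDerivAt (fun y'' : ℝ => q (log y'' + s / 2)) (deriv q x * (1 / y)) y := by
      have hlog : HasDerivAt (fun y'' : ℝ => log y'' + s / 2) (1 / y) y := by
        simpa using (Real.hasDerivAt_log hy0).add_const (s / 2)
      exact hqd.comp y hlog
    have hright : HasDerivAt (fun y'' : ℝ => (y'')⁻¹ * (q (log y'' + s / 2) - 2))
        (-(y ^ 2)⁻¹ * (q x - 2) + y⁻¹ * (deriv q x * (1 / y))) y :=
      (hasDerivAt_inv hy0).mul (hq_comp.sub_const 2)
    -- assemble
    rw [hUs.deriv, houter, hright.deriv, (hUy y hy).deriv, hU y s]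
    rw [hL (fderiv ℝ F (x, exp s)) (1 / 2) (exp s)]
    rw [hqx, ← hPDE]
    simp only [hadef, hbdef, hcdef, hxdef]
    have hexps : exp s = exp (s / 2) ^ 2 := by
      rw [sq, ← Real.exp_add, add_halves]
    have hau : u (log y + s / 2) (exp s) ≠ 0 := by
      have h := hapos.ne'
      simp only [hadef, hxdef] at h
      exact h
    rw [hexps] at hau ⊢
    have hE0 : exp (s / 2) ≠ 0 := (exp_pos _).ne'
    set A : ℝ := u (log y + s / 2) (exp (s / 2) ^ 2) with hA2
    set B : ℝ := fderiv ℝ F (log y + s / 2, exp (s / 2) ^ 2) (1, 0) with hB2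
    set C : ℝ := fderiv ℝ F (log y + s / 2, exp (s / 2) ^ 2) (0, 1) with hC2
    field_simp
    ring
end

section
/- The function u(x,t) = 2t / (x^2((ln x)^2 + 4t^2)) is a smooth positive solution of E(-1,1), i.e. of u_t = ∂_x(u_x/u) + u_x/(x u), on (0,∞) × (0,∞). Likewise, the function u'(x,t) = 2t/(x^2 + 4t^2) is a smooth positive solution of the diffusion equation u'_t = ∂_x(u'_x/u') on ℝ × (0,∞). -/
open Real Set

/-- `u` is a smooth positive solution of the porous medium equation
`E(n,μ) : u_t = ∂ₓ(uⁿ uₓ) + (μ/x) uⁿ uₓ` on the set `D ⊆ (0,∞) × ℝ`. -/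
def IsSolE (n μ : ℝ) (u : ℝ → ℝ → ℝ) (D : Set (ℝ × ℝ)) : Prop :=
  ContDiffOn ℝ (⊤ : ℕ∞) (fun p : ℝ × ℝ => u p.1 p.2) D ∧
  (∀ p ∈ D, 0 < u p.1 p.2) ∧
  ∀ p ∈ D,
    deriv (fun t => u p.1 t) p.2 =
      deriv (fun x => u x p.2 ^ n * deriv (fun x' => u x' p.2) x) p.1 +
        (μ / p.1) * u p.1 p.2 ^ n * deriv (fun x => u x p.2) p.1

lemma uE_deriv {t : ℝ} (ht : 0 < t) {y : ℝ} (hy : 0 < y) :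
    HasDerivAt (fun x => 2 * t / (x ^ 2 * ((Real.log x) ^ 2 + 4 * t ^ 2)))
      (-(2*t)*(2*y*((Real.log y)^2+4*t^2) + 2*y*Real.log y) /
        (y^2*((Real.log y)^2+4*t^2))^2) y := by
  have hy0 : y ≠ 0 := hy.ne'
  have hS : (0:ℝ) < (Real.log y)^2+4*t^2 := by nlinarith [sq_nonneg (Real.log y)]
  have hD : y^2*((Real.log y)^2+4*t^2) ≠ 0 := (mul_pos (pow_pos hy 2) hS).ne'
  have h1 : HasDerivAt (fun x : ℝ => x ^ 2 * ((Real.log x) ^ 2 + 4 * t ^ 2))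
      ((2:ℕ)*y^(2-1)*((Real.log y)^2+4*t^2) + y^2*((2:ℕ)*(Real.log y)^(2-1)*y⁻¹)) y :=
    (hasDerivAt_pow 2 y).mul (((Real.hasDerivAt_log hy0).pow 2).add_const _)
  have h2 : HasDerivAt (fun x => 2 * t / (x ^ 2 * ((Real.log x) ^ 2 + 4 * t ^ 2))) _ y :=
    (hasDerivAt_const y (2*t)).fun_div h1 hD
  convert h2 using 1
  field_simp
  ring

lemma uE_eq (x t : ℝ) (hx : 0 < x) (ht : 0 < t) :
    deriv (fun t' => 2 * t' / (x ^ 2 * ((Real.log x) ^ 2 + 4 * t' ^ 2))) t =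
      deriv (fun x' => (2 * t / (x' ^ 2 * ((Real.log x') ^ 2 + 4 * t ^ 2))) ^ (-1:ℝ) *
          deriv (fun x'' => 2 * t / (x'' ^ 2 * ((Real.log x'') ^ 2 + 4 * t ^ 2))) x') x +
        ((1:ℝ) / x) * (2 * t / (x ^ 2 * ((Real.log x) ^ 2 + 4 * t ^ 2))) ^ (-1:ℝ) *
          deriv (fun x' => 2 * t / (x' ^ 2 * ((Real.log x') ^ 2 + 4 * t ^ 2))) x := by
  have hx0 : x ≠ 0 := hx.ne'
  have ht0 : t ≠ 0 := ht.ne'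
  have hS : (0:ℝ) < (Real.log x)^2+4*t^2 := by nlinarith [sq_nonneg (Real.log x)]
  have hD : x^2*((Real.log x)^2+4*t^2) ≠ 0 := (mul_pos (pow_pos hx 2) hS).ne'
  have hTden : HasDerivAt (fun s : ℝ => x ^ 2 * ((Real.log x) ^ 2 + 4 * s ^ 2))
      (x^2 * (4 * (2*t))) t := by
    have h1 : HasDerivAt (fun s : ℝ => (Real.log x) ^ 2 + 4 * s ^ 2) (4 * (2*t)) t := by
      simpa using (HasDerivAt.const_add ((Real.log x)^2)
        (HasDerivAt.const_mul 4 (hasDerivAt_pow 2 t)))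
    simpa using HasDerivAt.const_mul (x^2) h1
  have h2s : HasDerivAt (fun s : ℝ => 2 * s) 2 t := by
    simpa using HasDerivAt.const_mul (2:ℝ) (hasDerivAt_id t)
  have hut : HasDerivAt (fun s : ℝ => 2 * s / (x ^ 2 * ((Real.log x) ^ 2 + 4 * s ^ 2)))
      ((2 * (x^2*((Real.log x)^2+4*t^2)) - 2*t*(x^2*(4*(2*t)))) /
        (x^2*((Real.log x)^2+4*t^2))^2) t := h2s.div hTden hD
  rw [hut.deriv]
  have hEq : Set.EqOn
      (fun x' => (2 * t / (x' ^ 2 * ((Real.log x') ^ 2 + 4 * t ^ 2))) ^ (-1:ℝ) *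
          deriv (fun x'' => 2 * t / (x'' ^ 2 * ((Real.log x'') ^ 2 + 4 * t ^ 2))) x')
      (fun x' => -(2*x'*((Real.log x')^2+4*t^2) + 2*x'*Real.log x') /
          (x'^2*((Real.log x')^2+4*t^2)))
      (Ioi 0) := by
    intro y hy
    have hy0 : (0:ℝ) < y := hy
    have hSy : (0:ℝ) < (Real.log y)^2+4*t^2 := by nlinarith [sq_nonneg (Real.log y)]
    have hDy : y^2*((Real.log y)^2+4*t^2) ≠ 0 := (mul_pos (pow_pos hy0 2) hSy).ne'
    simp only [(uE_deriv ht hy0).deriv, Real.rpow_neg_one]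
    field_simp
  have hmem : Ioi (0:ℝ) ∈ nhds x := Ioi_mem_nhds hx
  have hde := Filter.EventuallyEq.deriv_eq (Filter.eventuallyEq_of_mem hmem hEq)
  rw [hde]
  have hlog := Real.hasDerivAt_log hx0
  have hS' : HasDerivAt (fun y : ℝ => (Real.log y) ^ 2 + 4 * t ^ 2)
      (2 * Real.log x * x⁻¹) x := by
    simpa using (hlog.pow 2).add_const (4*t^2)
  have hy2 : HasDerivAt (fun y : ℝ => y ^ 2) (2 * x) x := by
    simpa using hasDerivAt_pow 2 x
  have ha : HasDerivAt (fun y : ℝ => 2 * y) 2 x := by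
    simpa using HasDerivAt.const_mul (2:ℝ) (hasDerivAt_id x)
  have hnum : HasDerivAt
      (fun y : ℝ => -(2*y*((Real.log y)^2+4*t^2) + 2*y*Real.log y))
      (-((2*((Real.log x)^2+4*t^2) + 2*x*(2*Real.log x*x⁻¹)) +
        (2*Real.log x + 2*x*x⁻¹))) x :=
    ((ha.mul hS').add (ha.mul hlog)).neg
  have hden : HasDerivAt (fun y : ℝ => y ^ 2 * ((Real.log y) ^ 2 + 4 * t ^ 2))
      (2*x*((Real.log x)^2+4*t^2) + x^2*(2*Real.log x*x⁻¹)) x := hy2.mul hS'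
  have hg : HasDerivAt
      (fun x' : ℝ => -(2*x'*((Real.log x')^2+4*t^2) + 2*x'*Real.log x') /
          (x'^2*((Real.log x')^2+4*t^2)))
      ((-((2*((Real.log x)^2+4*t^2) + 2*x*(2*Real.log x*x⁻¹)) +
        (2*Real.log x + 2*x*x⁻¹)) * (x^2*((Real.log x)^2+4*t^2)) -
        (-(2*x*((Real.log x)^2+4*t^2) + 2*x*Real.log x)) *
        (2*x*((Real.log x)^2+4*t^2) + x^2*(2*Real.log x*x⁻¹))) /
        (x^2*((Real.log x)^2+4*t^2))^2) x := hnum.div hden hD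
  rw [hg.deriv, (uE_deriv ht hx).deriv, Real.rpow_neg_one]
  field_simp
  ring

lemma uD_deriv {t : ℝ} (ht : 0 < t) (y : ℝ) :
    HasDerivAt (fun x => 2 * t / (x ^ 2 + 4 * t ^ 2))
      (-(2*t)*(2*y) / (y^2+4*t^2)^2) y := by
  have hD : y^2+4*t^2 ≠ 0 := by nlinarith [sq_nonneg y]
  have h1 : HasDerivAt (fun x : ℝ => x ^ 2 + 4 * t ^ 2) (2*y) y := by
    simpa using (hasDerivAt_pow 2 y).add_const (4*t^2)
  have h2 : HasDerivAt (fun x => 2 * t / (x ^ 2 + 4 * t ^ 2)) _ y :=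
    (hasDerivAt_const y (2*t)).fun_div h1 hD
  convert h2 using 1
  field_simp
  ring

lemma uD_eq (x t : ℝ) (ht : 0 < t) :
    deriv (fun t' => 2 * t' / (x ^ 2 + 4 * t' ^ 2)) t =
      deriv (fun x' => deriv (fun x'' => 2 * t / (x'' ^ 2 + 4 * t ^ 2)) x' /
          (2 * t / (x' ^ 2 + 4 * t ^ 2))) x := by
  have ht0 : t ≠ 0 := ht.ne'
  have hD : x^2+4*t^2 ≠ 0 := by nlinarith [sq_nonneg x]
  have hTden : HasDerivAt (fun s : ℝ => x ^ 2 + 4 * s ^ 2) (4*(2*t)) t := by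
    simpa using HasDerivAt.const_add (x^2) (HasDerivAt.const_mul 4 (hasDerivAt_pow 2 t))
  have h2s : HasDerivAt (fun s : ℝ => 2 * s) 2 t := by
    simpa using HasDerivAt.const_mul (2:ℝ) (hasDerivAt_id t)
  have hut : HasDerivAt (fun s : ℝ => 2 * s / (x ^ 2 + 4 * s ^ 2))
      ((2*(x^2+4*t^2) - 2*t*(4*(2*t))) / (x^2+4*t^2)^2) t := h2s.div hTden hD
  rw [hut.deriv]
  have hfun : (fun x' => deriv (fun x'' => 2 * t / (x'' ^ 2 + 4 * t ^ 2)) x' /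
          (2 * t / (x' ^ 2 + 4 * t ^ 2))) =
      fun x' => -(2*x') / (x'^2+4*t^2) := by
    funext y
    have hDy : y^2+4*t^2 ≠ 0 := by nlinarith [sq_nonneg y]
    rw [(uD_deriv ht y).deriv]
    field_simp
  rw [hfun]
  have hden : HasDerivAt (fun y : ℝ => y ^ 2 + 4 * t ^ 2) (2*x) x := by
    simpa using (hasDerivAt_pow 2 x).add_const (4*t^2)
  have hnum : HasDerivAt (fun y : ℝ => -(2*y)) (-2) x := by
    simpa using (HasDerivAt.const_mul (2:ℝ) (hasDerivAt_id x)).fun_neg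
  have hg := hnum.fun_div hden hD
  rw [hg.deriv]
  field_simp
  ring

/-- `u(x,t) = 2t/(x²((ln x)² + 4t²))` solves `E(-1,1)` on
`(0,∞) × (0,∞)`, and `u'(x,t) = 2t/(x² + 4t²)` solves the diffusion equation
`u'_t = ∂ₓ(u'ₓ/u')` on `ℝ × (0,∞)`. -/
theorem stmt6 :
    IsSolE (-1) 1 (fun x t => 2 * t / (x ^ 2 * ((log x) ^ 2 + 4 * t ^ 2)))
      (Ioi 0 ×ˢ Ioi 0) ∧
    IsSolDiff (fun x t => 2 * t / (x ^ 2 + 4 * t ^ 2)) (univ ×ˢ Ioi 0) := by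
  constructor
  · refine ⟨?_, ?_, ?_⟩
    · intro p hp
      rw [mem_prod] at hp
      have hx : (0:ℝ) < p.1 := hp.1
      have ht : (0:ℝ) < p.2 := hp.2
      apply ContDiffAt.contDiffWithinAt
      have hlog : ContDiffAt ℝ (⊤ : ℕ∞) (fun q : ℝ × ℝ => Real.log q.1) p :=
        (Real.contDiffAt_log.mpr hx.ne').comp p contDiffAt_fst
      have hS : (0:ℝ) < (Real.log p.1)^2 + 4*p.2^2 := by
        nlinarith [sq_nonneg (Real.log p.1)]
      have hden : ContDiffAt ℝ (⊤ : ℕ∞)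
          (fun q : ℝ × ℝ => q.1 ^ 2 * ((Real.log q.1) ^ 2 + 4 * q.2 ^ 2)) p :=
        (contDiffAt_fst.pow 2).mul ((hlog.pow 2).add (contDiffAt_const.mul (contDiffAt_snd.pow 2)))
      exact (contDiffAt_const.mul contDiffAt_snd).div hden (mul_pos (pow_pos hx 2) hS).ne'
    · intro p hp
      rw [mem_prod] at hp
      have hx : (0:ℝ) < p.1 := hp.1
      have ht : (0:ℝ) < p.2 := hp.2
      have hS : (0:ℝ) < (Real.log p.1)^2 + 4*p.2^2 := by
        nlinarith [sq_nonneg (Real.log p.1)]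
      exact div_pos (by linarith) (mul_pos (pow_pos hx 2) hS)
    · intro p hp
      rw [mem_prod] at hp
      exact uE_eq p.1 p.2 hp.1 hp.2
  · refine ⟨?_, ?_, ?_⟩
    · intro p hp
      rw [mem_prod] at hp
      have ht : (0:ℝ) < p.2 := hp.2
      apply ContDiffAt.contDiffWithinAt
      have hD : p.1^2 + 4*p.2^2 ≠ 0 := by nlinarith [sq_nonneg p.1]
      exact (contDiffAt_const.mul contDiffAt_snd).div
        ((contDiffAt_fst.pow 2).add (contDiffAt_const.mul (contDiffAt_snd.pow 2))) hD
    · intro p hp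
      rw [mem_prod] at hp
      have ht : (0:ℝ) < p.2 := hp.2
      have hD : (0:ℝ) < p.1^2 + 4*p.2^2 := by nlinarith [sq_nonneg p.1]
      exact div_pos (by linarith) hD
    · intro p hp
      rw [mem_prod] at hp
      exact uD_eq p.1 p.2 hp.2
end
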